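/- Let σ_ρ(x) = max(x, ρx) with 0 < ρ ≤ 1, let X = (x^(1),…,x^(N)) ∈ ℝ^{d×N} with labels y ∈ ℝ^N, and consider the loss L(a,w) = (1/(2N)) Σ_{n=1}^N (y^(n) − a·σ_ρ(wᵀx^(n)))². Let a : [0,∞) → ℝ and w : [0,∞) → ℝ^d be differentiable curves such that w(t)ᵀx^(n) ≠ 0 for all t ≥ 0 and all n, and (a'(t), w'(t)) equals the negative gradient of L at (a(t), w(t)). Assume δ := a(0)² − ‖w(0)‖² ≥ 0 and w̃(0) := a(0)w(0) ≠ 0, set z = −(3/2)·√(√(‖w̃(0)‖² + δ²/4) − δ/2) · w̃(0)/‖w̃(0)‖ and q(u) = q̂_δ(‖u‖) + zᵀu for u ≠ 0. If (a(t), w(t)) converges as t → ∞ to (a∞, w∞) with a∞·w∞ ≠ 0, w∞ᵀx^(n) ≠ 0 for all n, and a∞·σ_ρ(w∞ᵀx^(n)) = y^(n) for all n, then there exists ν ∈ ℝ^N such that the Lagrange stationarity conditions hold: the gradient in w of the map w ↦ q(a∞·w) at w∞ equals Σ_{n=1}^N ν_n times the gradient in w of the map w ↦ a∞·σ_ρ(wᵀx^(n))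 at w∞, and the derivative in a of the map a ↦ q(a·w∞) at a∞ equals Σ_{n=1}^N ν_n·σ_ρ(w∞ᵀx^(n)). -/

import Mathlib

/-- The square loss of a two-layer single neuron with leaky-ReLU activation
`σ_ρ(x) = max(x, ρx)`: `L(a,w) = (1/(2N)) Σₙ (yⁿ − a·σ_ρ(wᵀxⁿ))²`. -/
noncomputable def leakyLoss {d N : ℕ} (ρ : ℝ) (X : Fin N → EuclideanSpace ℝ (Fin d))
    (y : Fin N → ℝ) (a : ℝ) (w : EuclideanSpace ℝ (Fin d)) : ℝ :=
  1 / (2 * N) * ∑ n, (y n - a * max (∑ i, w i * X n i) (ρ * ∑ i, w i * X n i)) ^ 2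

/-- The radial part `q̂_δ` of the single-neuron implicit regularizer. -/
noncomputable def qhat (δ x : ℝ) : ℝ :=
  (x ^ 2 - δ / 2 * (δ / 2 + Real.sqrt (x ^ 2 + δ ^ 2 / 4))) *
    Real.sqrt (Real.sqrt (x ^ 2 + δ ^ 2 / 4) - δ / 2) / x

/-!
Along the gradient flow, `a² - ‖w‖²` is conserved (Euler's identity for the `1`-homogeneous
map `(a, w) ↦ a σ_ρ(⟪x, w⟫)`), and `w - w(0)` stays in the span of the data, since every
`w`-gradient of the loss does. As `δ ≥ 0`, `a` cannot vanish without `w` vanishing, so `a`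
keeps the sign `ε` of `a(0)`. With these invariants the gradient of `q` at `a∞ w∞` collapses
to `(3/2) ε (w∞ - w(0)) ∈ span X`; writing it as `∑ cₙ xⁿ` gives the multipliers
`νₙ = cₙ / σ_ρ'(⟪xⁿ, w∞⟫)`.
-/

open Filter Set
open scoped RealInnerProductSpace Topology

section Gradient

variable {F : Type*} [NormedAddCommGroup F] [InnerProductSpace ℝ F] [CompleteSpace F]
  {f f₁ : F → ℝ} {g g₁ x : F}

theorem HasDerivAt.comp_hasGradientAt {φ : ℝ → ℝ} {φ' : ℝ} (hφ : HasDerivAt φ φ' (f x))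
    (hf : HasGradientAt f g x) : HasGradientAt (fun v => φ (f v)) (φ' • g) x := by
  rw [hasGradientAt_iff_hasFDerivAt] at hf ⊢
  refine (hφ.comp_hasFDerivAt x hf).congr_fderiv ?_
  ext v
  simp

theorem hasGradientAt_inner_right (u x : F) : HasGradientAt (fun v => ⟪u, v⟫) u x := by
  rw [hasGradientAt_iff_hasFDerivAt]
  exact (innerSL ℝ u).hasFDerivAt

theorem hasGradientAt_norm_sq (x : F) : HasGradientAt (fun v => ‖v‖ ^ 2) ((2 : ℝ) • x) x := by
  rw [hasGradientAt_iff_hasFDerivAt]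
  refine (hasStrictFDerivAt_norm_sq x).hasFDerivAt.congr_fderiv ?_
  ext v
  simp

theorem HasGradientAt.add (hf : HasGradientAt f g x) (hf₁ : HasGradientAt f₁ g₁ x) :
    HasGradientAt (fun v => f v + f₁ v) (g + g₁) x := by
  rw [hasGradientAt_iff_hasFDerivAt] at hf hf₁ ⊢
  rw [map_add]
  exact hf.add hf₁

theorem HasGradientAt.fun_sum {ι : Type*} {s : Finset ι} {f : ι → F → ℝ} {g : ι → F}
    (h : ∀ i ∈ s, HasGradientAt (f i) (g i) x) :
    HasGradientAt (fun v => ∑ i ∈ s, f i v) (∑ i ∈ s, g i) x := by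
  rw [hasGradientAt_iff_hasFDerivAt, map_sum]
  exact HasFDerivAt.fun_sum fun i hi => (h i hi).hasFDerivAt

theorem HasGradientAt.comp_smul {c : ℝ} (hf : HasGradientAt f g (c • x)) :
    HasGradientAt (fun v => f (c • v)) (c • g) x := by
  rw [hasGradientAt_iff_hasFDerivAt] at hf ⊢
  refine (hf.comp x (c • ContinuousLinearMap.id ℝ F).hasFDerivAt).congr_fderiv ?_
  ext v
  simp

theorem HasGradientAt.hasDerivAt_comp_smul_const {c : ℝ} (hf : HasGradientAt f g (c • x)) :
    HasDerivAt (fun b : ℝ => f (b • x)) ⟪g, x⟫ c := by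
  refine (hf.hasFDerivAt.comp_hasDerivAt c ((hasDerivAt_id c).smul_const x)).congr_deriv ?_
  simp

end Gradient

section Regularizer

-- With `s = √(x² + δ²/4)` one has `x² = (s - δ/2)(s + δ/2)`, which turns `q̂_δ` into a
-- product that is easy to differentiate in `x²`.
theorem qhat_eq_of_pos {δ x : ℝ} (hx : 0 < x) :
    qhat δ x = √(√(x ^ 2 + δ ^ 2 / 4) + δ / 2) * (√(x ^ 2 + δ ^ 2 / 4) - δ) := by
  set s := √(x ^ 2 + δ ^ 2 / 4) with hs
  have hs2 : s ^ 2 = x ^ 2 + δ ^ 2 / 4 := Real.sq_sqrt (by positivity)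
  have hs0 : 0 ≤ s := Real.sqrt_nonneg _
  have hsub : 0 < s - δ / 2 := by nlinarith
  have hadd : 0 < s + δ / 2 := by nlinarith
  have hx_eq : x = √(s - δ / 2) * √(s + δ / 2) := by
    rw [← Real.sqrt_mul hsub.le, ← Real.sqrt_sq hx.le]
    congr 1
    linear_combination -hs2
  have hb := Real.sq_sqrt hsub.le
  have ha := Real.sq_sqrt hadd.le
  have hb0 := Real.sqrt_pos.2 hsub
  have ha0 := Real.sqrt_pos.2 hadd
  rw [qhat, ← hs, hx_eq]
  generalize √(s - δ / 2) = b at *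
  generalize √(s + δ / 2) = a at *
  field_simp
  linear_combination (4 * a ^ 2) * hb + (2 * δ) * ha

theorem hasDerivAt_qhat_sqrt {δ t : ℝ} (ht : 0 < t) :
    HasDerivAt (fun t => qhat δ √t) (3 / (4 * √(√(t + δ ^ 2 / 4) + δ / 2))) t := by
  have harg : 0 < t + δ ^ 2 / 4 := by positivity
  set s := √(t + δ ^ 2 / 4) with hs
  have hs0 : 0 < s := Real.sqrt_pos.2 harg
  have hs2 : s ^ 2 = t + δ ^ 2 / 4 := Real.sq_sqrt harg.le
  have hadd : 0 < s + δ / 2 := by nlinarith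
  have hS : HasDerivAt (fun u => √(u + δ ^ 2 / 4)) (1 / (2 * s)) t := by
    simpa using ((hasDerivAt_id t).add_const (δ ^ 2 / 4)).sqrt harg.ne'
  have hA : HasDerivAt (fun u => √(√(u + δ ^ 2 / 4) + δ / 2))
      (1 / (2 * s) / (2 * √(s + δ / 2))) t := (hS.add_const (δ / 2)).sqrt hadd.ne'
  have hqhat : (fun u => √(√(u + δ ^ 2 / 4) + δ / 2) * (√(u + δ ^ 2 / 4) - δ))
      =ᶠ[𝓝 t] fun u => qhat δ √u := by
    filter_upwards [lt_mem_nhds ht] with u hu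
    rw [qhat_eq_of_pos (Real.sqrt_pos.2 hu), Real.sq_sqrt hu.le]
  refine ((hA.mul (hS.sub_const δ)).congr_of_eventuallyEq hqhat.symm).congr_deriv ?_
  have hA2 := Real.sq_sqrt hadd.le
  have hA0 := Real.sqrt_pos.2 hadd
  rw [← hs]
  generalize √(s + δ / 2) = A at *
  field_simp
  linear_combination 8 * hA2

theorem sqrt_mul_sq_add_sub_sq_sq (α β : ℝ) :
    √((α * β) ^ 2 + (α ^ 2 - β ^ 2) ^ 2 / 4) = (α ^ 2 + β ^ 2) / 2 := by
  rw [show (α * β) ^ 2 + (α ^ 2 - β ^ 2) ^ 2 / 4 = ((α ^ 2 + β ^ 2) / 2) ^ 2 by ring]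
  exact Real.sqrt_sq (by positivity)

theorem sqrt_sqrt_norm_smul_sq_sub {F : Type*} [SeminormedAddCommGroup F] [NormedSpace ℝ F]
    (α : ℝ) (v : F) :
    √(√(‖α • v‖ ^ 2 + (α ^ 2 - ‖v‖ ^ 2) ^ 2 / 4) - (α ^ 2 - ‖v‖ ^ 2) / 2) = ‖v‖ := by
  rw [norm_smul, Real.norm_eq_abs, mul_pow, sq_abs, ← mul_pow, sqrt_mul_sq_add_sub_sq_sq]
  rw [show (α ^ 2 + ‖v‖ ^ 2) / 2 - (α ^ 2 - ‖v‖ ^ 2) / 2 = ‖v‖ ^ 2 by ring]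
  exact Real.sqrt_sq (norm_nonneg v)

theorem sqrt_sqrt_norm_smul_sq_add {F : Type*} [SeminormedAddCommGroup F] [NormedSpace ℝ F]
    (α : ℝ) (v : F) :
    √(√(‖α • v‖ ^ 2 + (α ^ 2 - ‖v‖ ^ 2) ^ 2 / 4) + (α ^ 2 - ‖v‖ ^ 2) / 2) = |α| := by
  rw [norm_smul, Real.norm_eq_abs, mul_pow, sq_abs, ← mul_pow, sqrt_mul_sq_add_sub_sq_sq]
  rw [show (α ^ 2 + ‖v‖ ^ 2) / 2 + (α ^ 2 - ‖v‖ ^ 2) / 2 = α ^ 2 by ring]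
  exact Real.sqrt_sq_eq_abs α

variable {F : Type*} [NormedAddCommGroup F] [InnerProductSpace ℝ F] [CompleteSpace F]

theorem hasGradientAt_qhat_norm (δ : ℝ) {u : F} (hu : u ≠ 0) :
    HasGradientAt (fun v => qhat δ ‖v‖)
      ((3 / (2 * √(√(‖u‖ ^ 2 + δ ^ 2 / 4) + δ / 2))) • u) u := by
  have h := HasDerivAt.comp_hasGradientAt (f := fun v : F => ‖v‖ ^ 2)
    (hasDerivAt_qhat_sqrt (δ := δ) (pow_pos (norm_pos_iff.2 hu) 2)) (hasGradientAt_norm_sq u)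
  simp only [Real.sqrt_sq (norm_nonneg _), smul_smul] at h
  convert h using 2
  ring

end Regularizer

section Leaky

noncomputable def leakySlope (ρ s : ℝ) : ℝ := if 0 < s then 1 else ρ

variable {ρ : ℝ}

theorem max_mul_self_eq_leakySlope_mul (hρ1 : ρ ≤ 1) (s : ℝ) :
    max s (ρ * s) = leakySlope ρ s * s := by
  unfold leakySlope
  split_ifs with hs
  · rw [one_mul, max_eq_left (mul_le_of_le_one_left hs.le hρ1)]
  · rw [max_eq_right]
    nlinarith

theorem leakySlope_ne_zero (hρ : ρ ≠ 0) (s : ℝ) : leakySlope ρ s ≠ 0 := by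
  unfold leakySlope
  split_ifs
  exacts [one_ne_zero, hρ]

theorem hasDerivAt_max_mul_self (hρ1 : ρ ≤ 1) {c : ℝ} (hc : c ≠ 0) :
    HasDerivAt (fun s => max s (ρ * s)) (leakySlope ρ c) c := by
  have hslope : ∀ᶠ s in 𝓝 c, leakySlope ρ s = leakySlope ρ c := by
    rcases hc.lt_or_gt with hneg | hpos
    · filter_upwards [gt_mem_nhds hneg] with s hs
      simp [leakySlope, hs.le.not_gt, hneg.le.not_gt]
    · filter_upwards [lt_mem_nhds hpos] with s hs
      simp [leakySlope, hs, hpos]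
  refine ((hasDerivAt_id c).const_mul (leakySlope ρ c)).congr_of_eventuallyEq ?_
    |>.congr_deriv (mul_one _)
  filter_upwards [hslope] with s hs
  rw [max_mul_self_eq_leakySlope_mul hρ1, hs, id]

variable {F : Type*} [NormedAddCommGroup F] [InnerProductSpace ℝ F] [CompleteSpace F]

theorem hasGradientAt_mul_max_inner (hρ1 : ρ ≤ 1) (A : ℝ) {x w : F} (hw : ⟪x, w⟫ ≠ 0) :
    HasGradientAt (fun v => A * max ⟪x, v⟫ (ρ * ⟪x, v⟫)) ((A * leakySlope ρ ⟪x, w⟫) • x) w :=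
  HasDerivAt.comp_hasGradientAt (f := fun v => ⟪x, v⟫)
    ((hasDerivAt_max_mul_self hρ1 hw).const_mul A) (hasGradientAt_inner_right x w)

end Leaky

theorem sum_mul_eq_inner {d : ℕ} (v x : EuclideanSpace ℝ (Fin d)) : ∑ i, v i * x i = ⟪x, v⟫ := by
  simp [PiLp.inner_apply]

section Loss

variable {d N : ℕ} {ρ : ℝ} {X : Fin N → EuclideanSpace ℝ (Fin d)} {y : Fin N → ℝ}

theorem leakyLoss_eq_sum (a : ℝ) (w : EuclideanSpace ℝ (Fin d)) :
    leakyLoss ρ X y a w = ∑ n, (y n - a * max ⟪X n, w⟫ (ρ * ⟪X n, w⟫)) ^ 2 / (2 * N) := by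
  simp only [leakyLoss, sum_mul_eq_inner, Finset.mul_sum]
  exact Finset.sum_congr rfl fun n _ => by ring

theorem hasDerivAt_leakyLoss_fst (a : ℝ) (w : EuclideanSpace ℝ (Fin d)) :
    HasDerivAt (fun b => leakyLoss ρ X y b w)
      (∑ n, (a * max ⟪X n, w⟫ (ρ * ⟪X n, w⟫) - y n) * max ⟪X n, w⟫ (ρ * ⟪X n, w⟫) / N) a := by
  simp only [leakyLoss_eq_sum]
  refine HasDerivAt.fun_sum fun n _ => ?_
  refine (((((hasDerivAt_id a).mul_const _).const_sub (y n)).pow 2).div_const _).congr_deriv ?_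
  simp only [id]
  ring

theorem hasGradientAt_leakyLoss_snd (hρ1 : ρ ≤ 1) (a : ℝ) {w : EuclideanSpace ℝ (Fin d)}
    (hk : ∀ n, ⟪X n, w⟫ ≠ 0) :
    HasGradientAt (fun v => leakyLoss ρ X y a v)
      (∑ n, ((a * max ⟪X n, w⟫ (ρ * ⟪X n, w⟫) - y n) * (a * leakySlope ρ ⟪X n, w⟫) / N) • X n)
      w := by
  simp only [leakyLoss_eq_sum]
  refine HasGradientAt.fun_sum fun n _ => HasDerivAt.comp_hasGradientAt
    (φ := fun s => (y n - a * max s (ρ * s)) ^ 2 / (2 * N)) (f := fun v => ⟪X n, v⟫) ?_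
    (hasGradientAt_inner_right _ _)
  refine (((((hasDerivAt_max_mul_self hρ1 (hk n)).const_mul a).const_sub (y n)).pow 2).div_const
    _).congr_deriv ?_
  ring

theorem leakyLoss_balance (hρ1 : ρ ≤ 1) (a : ℝ) {w : EuclideanSpace ℝ (Fin d)}
    (hk : ∀ n, ⟪X n, w⟫ ≠ 0) :
    a * deriv (fun b => leakyLoss ρ X y b w) a =
      ⟪w, gradient (fun v => leakyLoss ρ X y a v) w⟫ := by
  rw [(hasDerivAt_leakyLoss_fst a w).deriv, (hasGradientAt_leakyLoss_snd hρ1 a hk).gradient,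
    inner_sum, Finset.mul_sum]
  refine Finset.sum_congr rfl fun n _ => ?_
  rw [real_inner_smul_right, real_inner_comm (X n) w, max_mul_self_eq_leakySlope_mul hρ1]
  ring

theorem gradient_leakyLoss_mem_span (hρ1 : ρ ≤ 1) (a : ℝ) {w : EuclideanSpace ℝ (Fin d)}
    (hk : ∀ n, ⟪X n, w⟫ ≠ 0) :
    gradient (fun v => leakyLoss ρ X y a v) w ∈ Submodule.span ℝ (range X) := by
  rw [(hasGradientAt_leakyLoss_snd hρ1 a hk).gradient]
  exact Submodule.sum_mem _ fun n _ => Submodule.smul_mem _ _ (Submodule.subset_span ⟨n, rfl⟩)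

end Loss

section Flow

theorem eq_of_hasDerivAt_zero_of_nonneg {E : Type*} [NormedAddCommGroup E] [NormedSpace ℝ E]
    {f : ℝ → E} (hf : ∀ t, 0 ≤ t → HasDerivAt f 0 t) {t : ℝ} (ht : 0 ≤ t) : f t = f 0 :=
  constant_of_has_deriv_right_zero (fun s hs => (hf s hs.1).continuousAt.continuousWithinAt)
    (fun s hs => (hf s hs.1).hasDerivWithinAt) t ⟨ht, le_rfl⟩

theorem eq_of_tendsto_of_eq_of_nonneg {α : Type*} [TopologicalSpace α] [T2Space α]
    {f : ℝ → α} {c l : α} (hf : ∀ t, 0 ≤ t → f t = c) (hl : Tendsto f atTop (𝓝 l)) : l = c :=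
  tendsto_nhds_unique hl
    (tendsto_const_nhds.congr' (eventually_atTop.2 ⟨0, fun t ht => (hf t ht).symm⟩))

theorem mul_pos_of_tendsto_of_ne_zero {a : ℝ → ℝ} {l : ℝ} (hc : ContinuousOn a (Ici 0))
    (hne : ∀ t, 0 ≤ t → a t ≠ 0) (hl : Tendsto a atTop (𝓝 l)) (hl0 : l ≠ 0) : 0 < a 0 * l := by
  have hpos : ∀ t, 0 ≤ t → 0 < a 0 * a t := by
    intro t ht
    by_contra! hle
    have hzero : (0 : ℝ) ∈ uIcc (a 0) (a t) := by
      rw [mem_uIcc]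
      rcases mul_nonpos_iff.1 hle with h | h
      exacts [Or.inr ⟨h.2, h.1⟩, Or.inl h]
    obtain ⟨s, hs, has⟩ := (isPreconnected_Ici.image a hc).ordConnected.uIcc_subset
      (mem_image_of_mem a self_mem_Ici) (mem_image_of_mem a (mem_Ici.2 ht)) hzero
    exact hne s hs has
  refine (ge_of_tendsto (hl.const_mul (a 0)) ?_).lt_of_ne' (mul_ne_zero (hne 0 le_rfl) hl0)
  exact eventually_atTop.2 ⟨0, fun t ht => (hpos t ht).le⟩

theorem div_abs_eq_div_abs_of_mul_pos {a b : ℝ} (h : 0 < a * b) : a / |a| = b / |b| := by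
  rcases pos_and_pos_or_neg_and_neg_of_mul_pos h with ⟨ha, hb⟩ | ⟨ha, hb⟩
  · rw [abs_of_pos ha, abs_of_pos hb, div_self ha.ne', div_self hb.ne']
  · rw [abs_of_neg ha, abs_of_neg hb, div_neg, div_neg, div_self ha.ne, div_self hb.ne]

variable {F : Type*} [NormedAddCommGroup F] [InnerProductSpace ℝ F] [CompleteSpace F]

def IsGradientFlow (L : ℝ → F → ℝ) (a : ℝ → ℝ) (w : ℝ → F) : Prop :=
  ∀ t, 0 ≤ t → HasDerivAt a (-deriv (fun b => L b (w t)) (a t)) t ∧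
    HasDerivAt w (-gradient (fun v => L (a t) v) (w t)) t

variable {L : ℝ → F → ℝ} {a : ℝ → ℝ} {w : ℝ → F}

theorem IsGradientFlow.sq_sub_norm_sq_eq (hflow : IsGradientFlow L a w)
    (hbal : ∀ t, 0 ≤ t →
      a t * deriv (fun b => L b (w t)) (a t) = ⟪w t, gradient (fun v => L (a t) v) (w t)⟫)
    {t : ℝ} (ht : 0 ≤ t) : a t ^ 2 - ‖w t‖ ^ 2 = a 0 ^ 2 - ‖w 0‖ ^ 2 := by
  refine eq_of_hasDerivAt_zero_of_nonneg (f := fun t => a t ^ 2 - ‖w t‖ ^ 2)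
    (fun s hs => (((hflow s hs).1.pow 2).sub (hflow s hs).2.norm_sq).congr_deriv ?_) ht
  simp only [inner_neg_right, ← hbal s hs]
  ring

theorem IsGradientFlow.sub_mem_of_tendsto {K : Submodule ℝ F} [K.HasOrthogonalProjection]
    (hflow : IsGradientFlow L a w)
    (hK : ∀ t, 0 ≤ t → gradient (fun v => L (a t) v) (w t) ∈ K) {w' : F}
    (hw : Tendsto w atTop (𝓝 w')) : w' - w 0 ∈ K := by
  rw [← K.orthogonal_orthogonal, Submodule.mem_orthogonal]
  intro u hu
  have hconst : ∀ t, 0 ≤ t → ⟪u, w t⟫ = ⟪u, w 0⟫ := fun t ht =>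
    eq_of_hasDerivAt_zero_of_nonneg (f := fun t => ⟪u, w t⟫) (fun s hs =>
      ((hasDerivAt_const s u).inner ℝ (hflow s hs).2).congr_deriv (by
        simp [inner_neg_right, Submodule.inner_left_of_mem_orthogonal (hK s hs) hu])) ht
  rw [inner_sub_right, eq_of_tendsto_of_eq_of_nonneg hconst (tendsto_const_nhds.inner hw),
    sub_self]

end Flow

section LeakyFlow

variable {d N : ℕ} {ρ : ℝ} {X : Fin N → EuclideanSpace ℝ (Fin d)} {y : Fin N → ℝ}
  {a : ℝ → ℝ} {w : ℝ → EuclideanSpace ℝ (Fin d)}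

theorem IsGradientFlow.leakyLoss_sq_sub_norm_sq_eq (hflow : IsGradientFlow (leakyLoss ρ X y) a w)
    (hρ1 : ρ ≤ 1) (hkink : ∀ t, 0 ≤ t → ∀ n, ⟪X n, w t⟫ ≠ 0) {t : ℝ} (ht : 0 ≤ t) :
    a t ^ 2 - ‖w t‖ ^ 2 = a 0 ^ 2 - ‖w 0‖ ^ 2 :=
  hflow.sq_sub_norm_sq_eq (fun s hs => leakyLoss_balance hρ1 (a s) (hkink s hs)) ht

theorem IsGradientFlow.leakyLoss_ne_zero (hflow : IsGradientFlow (leakyLoss ρ X y) a w)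
    (hρ1 : ρ ≤ 1) (hkink : ∀ t, 0 ≤ t → ∀ n, ⟪X n, w t⟫ ≠ 0)
    (hδ : 0 ≤ a 0 ^ 2 - ‖w 0‖ ^ 2) (ha0 : a 0 ≠ 0) {t : ℝ} (ht : 0 ≤ t) : a t ≠ 0 := by
  intro hat
  rcases isEmpty_or_nonempty (Fin N) with hN | ⟨⟨n⟩⟩
  · have hconst : ∀ s, 0 ≤ s → HasDerivAt a 0 s := fun s hs => by
      simpa [leakyLoss] using (hflow s hs).1
    exact ha0 (hat ▸ (eq_of_hasDerivAt_zero_of_nonneg hconst ht).symm)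
  · have hcons := hflow.leakyLoss_sq_sub_norm_sq_eq hρ1 hkink ht
    rw [hat] at hcons
    have hwt : w t = 0 := norm_eq_zero.1 (by nlinarith [norm_nonneg (w t)])
    exact hkink t ht n (by simp [hwt])

theorem IsGradientFlow.leakyLoss_mul_pos (hflow : IsGradientFlow (leakyLoss ρ X y) a w)
    (hρ1 : ρ ≤ 1) (hkink : ∀ t, 0 ≤ t → ∀ n, ⟪X n, w t⟫ ≠ 0)
    (hδ : 0 ≤ a 0 ^ 2 - ‖w 0‖ ^ 2) (ha0 : a 0 ≠ 0) {a' : ℝ} (ha : Tendsto a atTop (𝓝 a'))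
    (ha' : a' ≠ 0) : 0 < a 0 * a' :=
  mul_pos_of_tendsto_of_ne_zero (fun t ht => (hflow t ht).1.continuousAt.continuousWithinAt)
    (fun _ ht => hflow.leakyLoss_ne_zero hρ1 hkink hδ ha0 ht) ha ha'

end LeakyFlow

theorem exists_lagrange_multipliers_of_mem_span {F : Type*} [NormedAddCommGroup F]
    [InnerProductSpace ℝ F] [CompleteSpace F] {ι : Type*} [Fintype ι] {ρ : ℝ} (hρ : ρ ≠ 0)
    (hρ1 : ρ ≤ 1) {X : ι → F} {q : F → ℝ} {A : ℝ} {w G : F} (hq : HasGradientAt q G (A • w))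
    (hG : G ∈ Submodule.span ℝ (range X)) (hk : ∀ n, ⟪X n, w⟫ ≠ 0) :
    ∃ ν : ι → ℝ,
      gradient (fun v => q (A • v)) w =
        ∑ n, ν n • gradient (fun v => A * max ⟪X n, v⟫ (ρ * ⟪X n, v⟫)) w ∧
      deriv (fun b => q (b • w)) A = ∑ n, ν n * max ⟪X n, w⟫ (ρ * ⟪X n, w⟫) := by
  obtain ⟨c, rfl⟩ := (Submodule.mem_span_range_iff_exists_fun ℝ).1 hG
  refine ⟨fun n => c n / leakySlope ρ ⟪X n, w⟫, ?_, ?_⟩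
  · rw [hq.comp_smul.gradient, Finset.smul_sum]
    refine Finset.sum_congr rfl fun n _ => ?_
    rw [(hasGradientAt_mul_max_inner hρ1 A (hk n)).gradient, smul_smul, smul_smul]
    field_simp [leakySlope_ne_zero hρ]
  · rw [hq.hasDerivAt_comp_smul_const.deriv, sum_inner]
    refine Finset.sum_congr rfl fun n _ => ?_
    rw [real_inner_smul_left, max_mul_self_eq_leakySlope_mul hρ1]
    field_simp [leakySlope_ne_zero hρ]

theorem stmt_17_general {d N : ℕ} (ρ : ℝ) (hρ0 : 0 < ρ) (hρ1 : ρ ≤ 1)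
    (X : Fin N → EuclideanSpace ℝ (Fin d)) (y : Fin N → ℝ)
    (a : ℝ → ℝ) (w : ℝ → EuclideanSpace ℝ (Fin d))
    (hkink : ∀ t, 0 ≤ t → ∀ n, ∑ i, w t i * X n i ≠ 0)
    (hflow : ∀ t, 0 ≤ t →
      HasDerivAt a (-deriv (fun b => leakyLoss ρ X y b (w t)) (a t)) t ∧
      HasDerivAt w (-gradient (fun v => leakyLoss ρ X y (a t) v) (w t)) t)
    (hδ : 0 ≤ a 0 ^ 2 - ‖w 0‖ ^ 2)
    (hinit : a 0 • w 0 ≠ 0)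
    (aInf : ℝ) (wInf : EuclideanSpace ℝ (Fin d))
    (hconva : Filter.Tendsto a Filter.atTop (nhds aInf))
    (hconvw : Filter.Tendsto w Filter.atTop (nhds wInf))
    (hlim0 : aInf • wInf ≠ 0)
    (hlimkink : ∀ n, ∑ i, wInf i * X n i ≠ 0) :
    let δ : ℝ := a 0 ^ 2 - ‖w 0‖ ^ 2
    let w0 : EuclideanSpace ℝ (Fin d) := a 0 • w 0
    let z : EuclideanSpace ℝ (Fin d) :=
      (-(3 / 2) * Real.sqrt (Real.sqrt (‖w0‖ ^ 2 + δ ^ 2 / 4) - δ / 2) / ‖w0‖) • w0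
    let q : EuclideanSpace ℝ (Fin d) → ℝ := fun u => qhat δ ‖u‖ + ∑ i, z i * u i
    ∃ ν : Fin N → ℝ,
      gradient (fun v => q (aInf • v)) wInf =
        ∑ n, ν n • gradient
          (fun v : EuclideanSpace ℝ (Fin d) =>
            aInf * max (∑ i, v i * X n i) (ρ * ∑ i, v i * X n i)) wInf ∧
      deriv (fun b => q (b • wInf)) aInf =
        ∑ n, ν n * max (∑ i, wInf i * X n i) (ρ * ∑ i, wInf i * X n i) := by
  intro δ w₀ z q
  have hflow : IsGradientFlow (leakyLoss ρ X y) a w := hflow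
  simp only [sum_mul_eq_inner] at hkink hlimkink ⊢
  obtain ⟨ha0, hw0⟩ := smul_ne_zero_iff.1 hinit
  have hδInf : aInf ^ 2 - ‖wInf‖ ^ 2 = δ := eq_of_tendsto_of_eq_of_nonneg
    (fun t ht => hflow.leakyLoss_sq_sub_norm_sq_eq hρ1 hkink ht)
    ((hconva.pow 2).sub (hconvw.norm.pow 2))
  have hsign : aInf / |aInf| = a 0 / |a 0| := (div_abs_eq_div_abs_of_mul_pos
    (hflow.leakyLoss_mul_pos hρ1 hkink hδ ha0 hconva (left_ne_zero_of_smul hlim0))).symm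
  have hz : z = (-(3 / 2) * (a 0 / |a 0|)) • w 0 := by
    simp only [z, w₀, δ]
    rw [sqrt_sqrt_norm_smul_sq_sub, norm_smul, Real.norm_eq_abs, smul_smul]
    congr 1
    field_simp [norm_ne_zero_iff.2 hw0]
  have hradial : √(√(‖aInf • wInf‖ ^ 2 + δ ^ 2 / 4) + δ / 2) = |aInf| :=
    hδInf ▸ sqrt_sqrt_norm_smul_sq_add aInf wInf
  have hq : HasGradientAt q ((3 / 2 * (a 0 / |a 0|)) • (wInf - w 0)) (aInf • wInf) := by
    have h := (hasGradientAt_qhat_norm δ hlim0).add (hasGradientAt_inner_right z (aInf • wInf))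
    rw [hradial, hz, smul_smul] at h
    convert h using 1
    · funext v
      simp only [q, sum_mul_eq_inner, real_inner_comm, hz]
    · rw [← hsign]
      module
  exact exists_lagrange_multipliers_of_mem_span hρ0.ne' hρ1 hq (Submodule.smul_mem _ _
    (hflow.sub_mem_of_tendsto (fun t ht => gradient_leakyLoss_mem_span hρ1 (a t) (hkink t ht))
      hconvw)) hlimkink

/-- for gradient flow on a single leaky-ReLU neuron whose trajectory
avoids the activation kinks, with balancedness `δ ≥ 0` and nonzero initialization,
any limit `(a∞, w∞)` interpolating the data satisfies the Lagrange stationarity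
conditions of minimizing `q(aw) = q̂_δ(‖aw‖) + zᵀ(aw)` subject to
`a·σ_ρ(Xᵀw) = y`. -/
theorem stmt_17 {d N : ℕ} (ρ : ℝ) (hρ0 : 0 < ρ) (hρ1 : ρ ≤ 1)
    (X : Fin N → EuclideanSpace ℝ (Fin d)) (y : Fin N → ℝ)
    (a : ℝ → ℝ) (w : ℝ → EuclideanSpace ℝ (Fin d))
    (hkink : ∀ t, 0 ≤ t → ∀ n, ∑ i, w t i * X n i ≠ 0)
    (hflow : ∀ t, 0 ≤ t →
      HasDerivAt a (-deriv (fun b => leakyLoss ρ X y b (w t)) (a t)) t ∧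
      HasDerivAt w (-gradient (fun v => leakyLoss ρ X y (a t) v) (w t)) t)
    (hδ : 0 ≤ a 0 ^ 2 - ‖w 0‖ ^ 2)
    (hinit : a 0 • w 0 ≠ 0)
    (aInf : ℝ) (wInf : EuclideanSpace ℝ (Fin d))
    (hconva : Filter.Tendsto a Filter.atTop (nhds aInf))
    (hconvw : Filter.Tendsto w Filter.atTop (nhds wInf))
    (hlim0 : aInf • wInf ≠ 0)
    (hlimkink : ∀ n, ∑ i, wInf i * X n i ≠ 0)
    (hfit : ∀ n, aInf * max (∑ i, wInf i * X n i) (ρ * ∑ i, wInf i * X n i) = y n) :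
    let δ : ℝ := a 0 ^ 2 - ‖w 0‖ ^ 2
    let w0 : EuclideanSpace ℝ (Fin d) := a 0 • w 0
    let z : EuclideanSpace ℝ (Fin d) :=
      (-(3 / 2) * Real.sqrt (Real.sqrt (‖w0‖ ^ 2 + δ ^ 2 / 4) - δ / 2) / ‖w0‖) • w0
    let q : EuclideanSpace ℝ (Fin d) → ℝ := fun u => qhat δ ‖u‖ + ∑ i, z i * u i
    ∃ ν : Fin N → ℝ,
      gradient (fun v => q (aInf • v)) wInf =
        ∑ n, ν n • gradient
          (fun v : EuclideanSpace ℝ (Fin d) =>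
            aInf * max (∑ i, v i * X n i) (ρ * ∑ i, v i * X n i)) wInf ∧
      deriv (fun b => q (b • wInf)) aInf =
        ∑ n, ν n * max (∑ i, wInf i * X n i) (ρ * ∑ i, wInf i * X n i) :=
  stmt_17_general ρ hρ0 hρ1 X y a w hkink hflow hδ hinit aInf wInf hconva hconvw hlim0 hlimkink
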